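/- arXiv:2202.09400 — 2 statements merged into one kernel-verified Lean document; each statement's English description precedes it below -/
import Mathlib

section
/- Rotation equivariance of cross-correlation: for an image f : ℝ² → ℝ^k, a kernel K : ℝ² → ℝ^(l×k) supported on integer points, and a rotation g ∈ SO(2) preserving ℤ², the rotated cross-correlation satisfies T_g⁰(K ⋆ f) = (T_g⁰ K) ⋆ (T_g⁰ f), where (K ⋆ f)(v) = ∑_{w∈ℤ²} K(w) · f(v+w) and (T_g⁰ h)(v) = h(g⁻¹v). -/
open Matrix
/-- Embedding of the integer lattice `ℤ²` into `ℝ²`. -/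
def toR (w : Fin 2 → ℤ) : Fin 2 → ℝ := fun i => (w i : ℝ)

/-- Cross-correlation of a finitely supported matrix-valued kernel `K` on the lattice `ℤ²`
with a vector-valued image `f : ℝ² → ℝ^k`: `(K ⋆ f)(v) = ∑_{w ∈ ℤ²} K(w) · f(v + w)`. -/
noncomputable def corr {k l : ℕ} (K : (Fin 2 → ℤ) →₀ Matrix (Fin l) (Fin k) ℝ)
    (f : (Fin 2 → ℝ) → (Fin k → ℝ)) : (Fin 2 → ℝ) → (Fin l → ℝ) :=
  fun v => ∑ w ∈ K.support, (K w).mulVec (f (v + toR w))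

theorem corr_comp_addMonoidHom {k l : ℕ} (φ : (Fin 2 → ℝ) →+ (Fin 2 → ℝ))
    (σ : (Fin 2 → ℤ) ≃ (Fin 2 → ℤ)) (hφσ : ∀ w, φ (toR (σ w)) = toR w)
    (K : (Fin 2 → ℤ) →₀ Matrix (Fin l) (Fin k) ℝ) (f : (Fin 2 → ℝ) → (Fin k → ℝ))
    (v : Fin 2 → ℝ) :
    corr K f (φ v) = corr (Finsupp.equivMapDomain σ K) (f ∘ φ) v := by
  refine Finset.sum_equiv σ (fun w => ?_) (fun w _ => ?_)
  · simp only [Finsupp.mem_support_iff, Finsupp.equivMapDomain_apply, Equiv.symm_apply_apply]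
  · simp only [Finsupp.equivMapDomain_apply, Equiv.symm_apply_apply, Function.comp_apply,
      map_add, hφσ]

/-- Rotation equivariance of cross-correlation: for `g ∈ SO(2)` mapping `ℤ²` bijectively to
itself (via `σ`), we have `T_g⁰(K ⋆ f) = (T_g⁰ K) ⋆ (T_g⁰ f)`, where `(T_g⁰ h)(v) = h(g⁻¹ v)`
(and `g⁻¹ = gᵀ` since `g` is orthogonal), and the rotated kernel is `K ∘ σ⁻¹`. -/
theorem stmt0 {k l : ℕ} (g : Matrix (Fin 2) (Fin 2) ℝ)
    (hg : g ∈ Matrix.specialOrthogonalGroup (Fin 2) ℝ)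
    (σ : (Fin 2 → ℤ) ≃ (Fin 2 → ℤ))
    (hσ : ∀ w : Fin 2 → ℤ, toR (σ w) = g.mulVec (toR w))
    (K : (Fin 2 → ℤ) →₀ Matrix (Fin l) (Fin k) ℝ)
    (f : (Fin 2 → ℝ) → (Fin k → ℝ)) (v : Fin 2 → ℝ) :
    corr K f (gᵀ.mulVec v)
      = corr (Finsupp.equivMapDomain σ K) (fun x => f (gᵀ.mulVec x)) v := by
  have hgg : gᵀ * g = 1 := (mem_orthogonalGroup_iff' _ _).mp hg.1
  have hσ_inv : ∀ w, gᵀ *ᵥ toR (σ w) = toR w := fun w => by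
    rw [hσ, mulVec_mulVec, hgg, one_mulVec]
  exact corr_comp_addMonoidHom (mulVecLin gᵀ).toAddMonoidHom σ hσ_inv K f v
end

section
/- Cₙ × Cₙ-equivariance of Equivariant Transporter (Proposition 2): if ψ and φ are Cₙ-equivariant maps on images and Ψ(c) := ℛₙ(ψ(c)), then for all g₁, g₂ ∈ Cₙ, Ψ(T_{g₁}⁰ c) ⋆ φ(T_{g₂}⁰ o) = ρ_reg(g₂ - g₁) · T_{g₂}⁰ ( Ψ(c) ⋆ φ(o) ), where ρ_reg acts by cyclic channel permutation and T_{g₂}⁰ rotates pixel positions. -/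
open Matrix

/-- The planar rotation matrix by angle `θ`. -/
noncomputable def Rot (θ : ℝ) : Matrix (Fin 2) (Fin 2) ℝ :=
  !![Real.cos θ, -Real.sin θ; Real.sin θ, Real.cos θ]

/-- The action `T⁰` of the group element `g^i` (where `g = Rot_{2π/n}` generates `Cₙ`
and `i : ZMod n`) on images `f : ℝ² → ℝ`, given by `(T_{g^i}⁰ f)(x) = f(g^{-i} x)`. -/
noncomputable def Tpow (n : ℕ) (i : ZMod n) (f : (Fin 2 → ℝ) → ℝ) : (Fin 2 → ℝ) → ℝ :=
  fun x => f ((Rot (-(2 * Real.pi * i.val / n))).mulVec x)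

/-- Channelwise cross-correlation of an `n`-channel kernel `K` with an image `h`:
`(K ⋆ h)(v)ᵢ = ∑_{w ∈ ℤ²} Kᵢ(w) h(v + w)`. -/
noncomputable def xcorrN (n : ℕ) (K : ZMod n → ((Fin 2 → ℝ) → ℝ))
    (h : (Fin 2 → ℝ) → ℝ) : (Fin 2 → ℝ) → ZMod n → ℝ :=
  fun v i => ∑' w : Fin 2 → ℤ, K i (toR w) * h (v + toR w)

/-- `Ψ(c) = ℛₙ(ψ(c))`: the `n`-channel lifted kernel, `Ψ(c)ᵢ = T_{g^i}⁰(ψ(c))`. -/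
noncomputable def PsiLift (n : ℕ) (ψ : ((Fin 2 → ℝ) → ℝ) → ((Fin 2 → ℝ) → ℝ))
    (c : (Fin 2 → ℝ) → ℝ) : ZMod n → ((Fin 2 → ℝ) → ℝ) :=
  fun i => Tpow n i (ψ c)

/-! Rotating the input `c` by `g₁` cyclically shifts the channels of the lifted kernel `Ψ(c)`,
which we write as the rotation by `g₂` of `Ψ(c)` shifted by `g₂ - g₁`. Since `g₂` permutes the
lattice, the cross-correlation of two images both rotated by `g₂` is the rotation by `g₂` of
their cross-correlation, and the channel shift passes through unchanged. The only arithmetic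
needed is that `i ↦ Rot (2π i / n)` is a homomorphism on `ZMod n`. -/

lemma Rot_add (a b : ℝ) : Rot (a + b) = Rot a * Rot b := by
  rw [Rot, Rot, Rot, mul_fin_two, Real.cos_add, Real.sin_add]
  ext i j
  fin_cases i <;> fin_cases j <;> simp <;> ring

lemma Rot_zero : Rot 0 = 1 := by
  simp [Rot, one_fin_two]

lemma Rot_neg_mul_self (θ : ℝ) : Rot (-θ) * Rot θ = 1 := by
  rw [← Rot_add, neg_add_cancel, Rot_zero]

lemma Rot_add_int_mul_two_pi (θ : ℝ) (k : ℤ) : Rot (θ + k * (2 * Real.pi)) = Rot θ := by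
  simp [Rot, Real.cos_add_int_mul_two_pi, Real.sin_add_int_mul_two_pi]

lemma Rot_neg_two_pi_mul_mod_div (n m : ℕ) :
    Rot (-(2 * Real.pi * (m % n : ℕ) / n)) = Rot (-(2 * Real.pi * m / n)) := by
  rcases Nat.eq_zero_or_pos n with rfl | hn
  · simp
  have hmod : ((m % n : ℕ) : ℝ) = m - n * (m / n : ℕ) := by
    rw [eq_sub_iff_add_eq, ← Nat.cast_mul, ← Nat.cast_add, Nat.mod_add_div]
  rw [hmod, ← Rot_add_int_mul_two_pi _ (-(m / n : ℕ) : ℤ)]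
  generalize m / n = q
  congr 1
  field_simp
  push_cast
  ring

-- For `n = 0` every angle here is `0`, since division by zero returns `0`.
lemma Rot_zmod_add (n : ℕ) (a b : ZMod n) :
    Rot (-(2 * Real.pi * (a + b).val / n)) =
      Rot (-(2 * Real.pi * a.val / n)) * Rot (-(2 * Real.pi * b.val / n)) := by
  rcases Nat.eq_zero_or_pos n with rfl | hn
  · simp [Rot_zero]
  have : NeZero n := ⟨hn.ne'⟩
  rw [ZMod.val_add, Rot_neg_two_pi_mul_mod_div, ← Rot_add]
  congr 1
  push_cast
  ring

lemma Tpow_Tpow (n : ℕ) (i j : ZMod n) (f : (Fin 2 → ℝ) → ℝ) :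
    Tpow n i (Tpow n j f) = Tpow n (i + j) f := by
  funext x
  simp only [Tpow, mulVec_mulVec, add_comm i j, Rot_zmod_add]

lemma PsiLift_Tpow (n : ℕ) {ψ : ((Fin 2 → ℝ) → ℝ) → ((Fin 2 → ℝ) → ℝ)}
    (hψ : ∀ (g : ZMod n) (c), ψ (Tpow n g c) = Tpow n g (ψ c))
    (c : (Fin 2 → ℝ) → ℝ) (g₁ g₂ : ZMod n) :
    PsiLift n ψ (Tpow n g₁ c) = fun i => Tpow n g₂ (PsiLift n ψ c (i - (g₂ - g₁))) := by
  funext i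
  simp only [PsiLift, hψ, Tpow_Tpow]
  congr 1
  ring

lemma xcorrN_Tpow (n : ℕ) {g : ZMod n} (σ : (Fin 2 → ℤ) ≃ (Fin 2 → ℤ))
    (hσ : ∀ w, toR (σ w) = (Rot (2 * Real.pi * g.val / n)).mulVec (toR w))
    (K : ZMod n → ((Fin 2 → ℝ) → ℝ)) (h : (Fin 2 → ℝ) → ℝ) :
    xcorrN n (fun i => Tpow n g (K i)) (Tpow n g h)
      = fun x => xcorrN n K h ((Rot (-(2 * Real.pi * g.val / n))).mulVec x) := by
  funext x i
  simp only [xcorrN, Tpow]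
  rw [← σ.tsum_eq]
  refine tsum_congr fun w => ?_
  simp only [hσ, mulVec_add, mulVec_mulVec, Rot_neg_mul_self, one_mulVec]

theorem stmt5_general (n : ℕ)
    (ψ φ : ((Fin 2 → ℝ) → ℝ) → ((Fin 2 → ℝ) → ℝ))
    (hψ : ∀ (g : ZMod n) (c), ψ (Tpow n g c) = Tpow n g (ψ c))
    (hφ : ∀ (g : ZMod n) (o), φ (Tpow n g o) = Tpow n g (φ o))
    (hlat : ∀ i : ZMod n, ∃ σ : (Fin 2 → ℤ) ≃ (Fin 2 → ℤ),
      ∀ w : Fin 2 → ℤ, toR (σ w) = (Rot (2 * Real.pi * i.val / n)).mulVec (toR w))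
    (c o : (Fin 2 → ℝ) → ℝ) (g₁ g₂ : ZMod n) :
    xcorrN n (PsiLift n ψ (Tpow n g₁ c)) (φ (Tpow n g₂ o))
      = fun x i => xcorrN n (PsiLift n ψ c) (φ o)
          ((Rot (-(2 * Real.pi * g₂.val / n))).mulVec x) (i - (g₂ - g₁)) := by
  obtain ⟨σ, hσ⟩ := hlat g₂
  rw [PsiLift_Tpow n hψ c g₁ g₂, hφ, xcorrN_Tpow n σ hσ]
  rfl

/-- Cₙ × Cₙ-equivariance of Equivariant Transporter (Proposition 2): if `ψ` and `φ` are
Cₙ-equivariant and `Ψ(c) = ℛₙ(ψ(c))`, then for all `g₁, g₂ ∈ Cₙ`,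
`Ψ(T_{g₁}⁰ c) ⋆ φ(T_{g₂}⁰ o) = ρ_reg(g₂ - g₁) · T_{g₂}⁰ (Ψ(c) ⋆ φ(o))`,
where `(ρ_reg(j) F)(v)ᵢ = F(v)_{i-j}` cyclically shifts channels and `T_{g₂}⁰` rotates
pixel positions. Kernels are assumed finitely supported on the index lattice, and each
element of `Cₙ` is assumed to biject the index lattice. -/
theorem stmt5 (n : ℕ) [NeZero n]
    (ψ φ : ((Fin 2 → ℝ) → ℝ) → ((Fin 2 → ℝ) → ℝ))
    (hψ : ∀ (g : ZMod n) (c), ψ (Tpow n g c) = Tpow n g (ψ c))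
    (hφ : ∀ (g : ZMod n) (o), φ (Tpow n g o) = Tpow n g (φ o))
    (hfin : ∀ (c : (Fin 2 → ℝ) → ℝ) (i : ZMod n),
      (Function.support fun w : Fin 2 → ℤ => PsiLift n ψ c i (toR w)).Finite)
    (hlat : ∀ i : ZMod n, ∃ σ : (Fin 2 → ℤ) ≃ (Fin 2 → ℤ),
      ∀ w : Fin 2 → ℤ, toR (σ w) = (Rot (2 * Real.pi * i.val / n)).mulVec (toR w))
    (c o : (Fin 2 → ℝ) → ℝ) (g₁ g₂ : ZMod n) :
    xcorrN n (PsiLift n ψ (Tpow n g₁ c)) (φ (Tpow n g₂ o))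
      = fun x i => xcorrN n (PsiLift n ψ c) (φ o)
          ((Rot (-(2 * Real.pi * g₂.val / n))).mulVec x) (i - (g₂ - g₁)) :=
  stmt5_general n ψ φ hψ hφ hlat c o g₁ g₂
end
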